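/- Let xⁿ ∈ Q and x ∈ Q. Then x is a scheme update of xⁿ (i.e. x satisfies the fully discrete scheme equations) if and only if x minimizes J over Q, i.e. J(x) ≤ J(z) for all z ∈ Q. (Variational characterization of the scheme used in the proof of Theorem 4.1.) -/

import Mathlib

/-!
`J` is convex on `Q`, and `h` times the residual `R_i` of the scheme equation at an interior node
is `∂J/∂x_i`. Termwise tangent inequalities (for the perspective `D ↦ D H(u/D)`, for `V_c`, and for
the pairwise energy of the even kernel `W_c`), together with a summation by parts, give
`J(x) + Σ_i h (z_i - x_i) R_i(x) ≤ J(z)` for all `x, z ∈ Q`; so a scheme update minimizes `J`.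
Conversely, applying the same inequality at `x + t e_i` against a minimizer `x` gives
`t R_i(x + t e_i) ≥ 0` for small `t`, and continuity of `R_i` forces `R_i(x) = 0`.
-/

open Finset Filter

noncomputable section

/-- Forward difference onto cells: `(D_h l)_{i-1/2} = (l_i - l_{i-1})/h` (use index `i`, `1 ≤ i ≤ M`). -/
def DhOp (h : ℝ) (l : ℕ → ℝ) (i : ℕ) : ℝ := (l i - l (i - 1)) / h

/-- Difference of a cell function back onto nodes: `(d_h φ)_i = (φ_{i+1/2} - φ_{i-1/2})/h`;
a cell function `φ` is encoded by `φ i = φ_{i-1/2}`. -/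
def dhOp (h : ℝ) (φ : ℕ → ℝ) (i : ℕ) : ℝ := (φ (i + 1) - φ i) / h

/-- Central difference `D̃_h` on nodes. -/
def DtOp (M : ℕ) (h : ℝ) (l : ℕ → ℝ) (i : ℕ) : ℝ :=
  if i = 0 then (l 1 - l 0) / h
  else if i = M then (l M - l (M - 1)) / h
  else (l (i + 1) - l (i - 1)) / (2 * h)

/-- Node inner product `⟨l, g⟩_E`. -/
def ipE (M : ℕ) (h : ℝ) (l g : ℕ → ℝ) : ℝ :=
  h * (l 0 * g 0 / 2 + (∑ i ∈ Finset.Ioo 0 M, l i * g i) + l M * g M / 2)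

/-- Cell inner product `⟨φ, ψ⟩_C`. -/
def ipC (M : ℕ) (h : ℝ) (φ ψ : ℕ → ℝ) : ℝ :=
  h * ∑ i ∈ Finset.Icc 1 M, φ i * ψ i

/-- The admissible (ordered) set `Q`. -/
def inQ (M : ℕ) (X0 XM : ℝ) (l : ℕ → ℝ) : Prop :=
  l 0 = X0 ∧ l M = XM ∧ ∀ i, 1 ≤ i → i ≤ M → l (i - 1) < l i

/-- The closure `Q̄` of the admissible set. -/
def inQbar (M : ℕ) (X0 XM : ℝ) (l : ℕ → ℝ) : Prop :=
  l 0 = X0 ∧ l M = XM ∧ ∀ i, 1 ≤ i → i ≤ M → l (i - 1) ≤ l i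

/-- `Ŝ[x]_i = ⟨K(x_i - y), u₀(Y)⟩_E` for a kernel `K` (e.g. `K = W_c'`);
also used as `w[x]_i` when `K = W` itself. -/
def Shat (M : ℕ) (h : ℝ) (K : ℝ → ℝ) (u0 x : ℕ → ℝ) (i : ℕ) : ℝ :=
  ipE M h (fun j => K (x i - x j)) u0

/-- The cell function `G[x]_{i-1/2} = s·H'(s) - H(s)`, `s = u_{0,i-1/2}/(D_h x)_{i-1/2}`. -/
def Gcell (h : ℝ) (H : ℝ → ℝ) (u0half x : ℕ → ℝ) (i : ℕ) : ℝ :=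
  u0half i / DhOp h x i * deriv H (u0half i / DhOp h x i) - H (u0half i / DhOp h x i)

/-- The mobility coefficient `c[x]_i = u_{0,i}² / ((D̃_h x)_i · f(u_{0,i}/(D̃_h x)_i))`. -/
def cCoef (M : ℕ) (h : ℝ) (f : ℝ → ℝ) (u0 x : ℕ → ℝ) (i : ℕ) : ℝ :=
  u0 i ^ 2 / (DtOp M h x i * f (u0 i / DtOp M h x i))

/-- `xp` is a scheme update of `x`: the fully discrete convex-splitting scheme equations. -/
def SchemeUpdate (M : ℕ) (h τ : ℝ) (H f Vc Ve Wc We : ℝ → ℝ)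
    (u0 u0half x xp : ℕ → ℝ) : Prop :=
  ∀ i, 1 ≤ i → i ≤ M - 1 →
    cCoef M h f u0 x i * (xp i - x i) / τ =
      -dhOp h (Gcell h H u0half xp) i - u0 i * deriv Vc (xp i)
        + u0 i * deriv Ve (x i)
        - u0 i * Shat M h (deriv Wc) u0 xp i + u0 i * Shat M h (deriv We) u0 x i

/-- The discrete total energy `E_N`. -/
def EN (M : ℕ) (h : ℝ) (H V W : ℝ → ℝ) (u0 u0half x : ℕ → ℝ) : ℝ :=
  h * ∑ i ∈ Finset.Icc 1 M, H (u0half i / DhOp h x i) * DhOp h x i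
    + ipE M h u0 (fun i => V (x i))
    + 1 / 2 * ipE M h u0 (fun i => Shat M h W u0 x i)

/-- The convex part `E_{N,c}` of the discrete total energy. -/
def ENc (M : ℕ) (h : ℝ) (H Vc Wc : ℝ → ℝ) (u0 u0half x : ℕ → ℝ) : ℝ :=
  h * ∑ i ∈ Finset.Icc 1 M, H (u0half i / DhOp h x i) * DhOp h x i
    + ipE M h u0 (fun i => Vc (x i))
    + 1 / 2 * ipE M h u0 (fun i => Shat M h Wc u0 x i)

/-- The concave (subtracted convex) part `E_{N,e}` of the discrete total energy. -/
def ENe (M : ℕ) (h : ℝ) (Ve We : ℝ → ℝ) (u0 x : ℕ → ℝ) : ℝ :=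
  ipE M h u0 (fun i => Ve (x i)) + 1 / 2 * ipE M h u0 (fun i => Shat M h We u0 x i)

/-- The convex functional `J` whose minimizer over `Q` is the scheme update of `xn`. -/
def Jfun (M : ℕ) (h τ : ℝ) (H f Vc Ve Wc We : ℝ → ℝ)
    (u0 u0half xn z : ℕ → ℝ) : ℝ :=
  1 / (2 * τ) * ipE M h (fun i => cCoef M h f u0 xn i * (z i - xn i)) (fun i => z i - xn i)
    + h * ∑ i ∈ Finset.Icc 1 M, H (u0half i / DhOp h z i) * DhOp h z i
    + ipE M h u0 (fun i => Vc (z i))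
    + 1 / 2 * ipE M h u0 (fun i => Shat M h Wc u0 z i)
    - ipE M h (fun i => u0 i * deriv Ve (xn i)) z
    - ipE M h (fun i => u0 i * Shat M h (deriv We) u0 xn i) z

open Topology

theorem ConvexOn.add_deriv_mul_sub_le {S : Set ℝ} {F : ℝ → ℝ} (hF : ConvexOn ℝ S F) {a b : ℝ}
    (ha : a ∈ S) (hb : b ∈ S) (hd : DifferentiableAt ℝ F a) :
    F a + deriv F a * (b - a) ≤ F b := by
  rcases lt_trichotomy a b with hab | rfl | hab
  · have hslope := hF.deriv_le_slope ha hb hab hd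
    rw [slope_def_field, le_div_iff₀ (sub_pos.2 hab)] at hslope
    linarith
  · simp
  · have hslope := hF.slope_le_deriv hb ha hab hd
    rw [slope_def_field, div_le_iff₀ (sub_pos.2 hab)] at hslope
    linarith

theorem deriv_neg_of_even {W : ℝ → ℝ} (hW : ∀ s, W (-s) = W s) (s : ℝ) :
    deriv W (-s) = -deriv W s := by
  have hcomp := deriv_comp_neg W s
  rw [funext hW] at hcomp
  linarith

/-- Tangent inequality for the perspective `D ↦ D H(u/D)`, whose derivative is
`H(u/D) - (u/D) H'(u/D)`. -/
theorem perspective_tangent_le {H : ℝ → ℝ} (hH : ConvexOn ℝ (Set.Ioi 0) H) {u D E : ℝ}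
    (hu : 0 < u) (hD : 0 < D) (hE : 0 < E) (hd : DifferentiableAt ℝ H (u / D)) :
    H (u / D) * D - (u / D * deriv H (u / D) - H (u / D)) * (E - D) ≤ H (u / E) * E := by
  have htan := hH.add_deriv_mul_sub_le (div_pos hu hD) (div_pos hu hE) hd
  calc H (u / D) * D - (u / D * deriv H (u / D) - H (u / D)) * (E - D)
      = (H (u / D) + deriv H (u / D) * (u / E - u / D)) * E := by
        field_simp
        ring
    _ ≤ H (u / E) * E := mul_le_mul_of_nonneg_right htan hE.le

theorem eq_zero_of_eventually_mul_nonneg {g : ℝ → ℝ} (hg : ContinuousAt g 0)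
    (hsign : ∀ᶠ t in 𝓝 0, 0 ≤ t * g t) : g 0 = 0 := by
  have hright : ∀ᶠ t in 𝓝[>] 0, 0 ≤ g t := by
    filter_upwards [nhdsWithin_le_nhds hsign, self_mem_nhdsWithin] with t ht (htpos : 0 < t)
    exact nonneg_of_mul_nonneg_right ht htpos
  have hleft : ∀ᶠ t in 𝓝[<] 0, g t ≤ 0 := by
    filter_upwards [nhdsWithin_le_nhds hsign, self_mem_nhdsWithin] with t ht (htneg : t < 0)
    exact nonpos_of_mul_nonneg_right ht htneg
  exact le_antisymm (le_of_tendsto (hg.tendsto.mono_left nhdsWithin_le_nhds) hleft)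
    (ge_of_tendsto (hg.tendsto.mono_left nhdsWithin_le_nhds) hright)

theorem sum_Icc_mul_sub_eq (G w : ℕ → ℝ) (hw : w 0 = 0) : ∀ M : ℕ,
    ∑ k ∈ Icc 1 M, G k * (w k - w (k - 1))
      = G M * w M + ∑ i ∈ Ioo 0 M, (G i - G (i + 1)) * w i
  | 0 => by simp [hw]
  | M + 1 => by
    rw [sum_Icc_succ_top (by omega), sum_Icc_mul_sub_eq G w hw M]
    rcases Nat.eq_zero_or_pos M with rfl | hM
    · simp [hw, show Ioo 0 1 = (∅ : Finset ℕ) from rfl]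
    · rw [show Ioo 0 (M + 1) = Ioc 0 M from Ioo_succ_right_eq_Ioc 0 M,
        ← Ioo_insert_right hM, sum_insert (by simp)]
      simp only [Nat.add_sub_cancel]
      ring

theorem ConvexOn.pairwise_tangent_le {ι : Type*} {W : ℝ → ℝ} (hW : ConvexOn ℝ Set.univ W)
    (hWd : Differentiable ℝ W) (hWeven : ∀ r, W (-r) = W r) (s : Finset ι) {B x z : ι → ℝ}
    (hB : ∀ i ∈ s, 0 ≤ B i) :
    ∑ i ∈ s, ∑ j ∈ s, B i * B j * W (x i - x j)
        + 2 * ∑ i ∈ s, B i * (z i - x i) * ∑ j ∈ s, B j * deriv W (x i - x j)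
      ≤ ∑ i ∈ s, ∑ j ∈ s, B i * B j * W (z i - z j) := by
  set P : ι → ι → ℝ := fun i j => B i * B j * deriv W (x i - x j)
  have hpair : ∀ i ∈ s, ∀ j ∈ s,
      B i * B j * W (x i - x j) + P i j * ((z i - x i) - (z j - x j))
        ≤ B i * B j * W (z i - z j) := by
    intro i hi j hj
    have htan := hW.add_deriv_mul_sub_le (Set.mem_univ (x i - x j)) (Set.mem_univ (z i - z j))
      (hWd _)
    calc B i * B j * W (x i - x j) + P i j * ((z i - x i) - (z j - x j))
        = B i * B j * (W (x i - x j) + deriv W (x i - x j) * (z i - z j - (x i - x j))) := by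
          ring
      _ ≤ B i * B j * W (z i - z j) :=
          mul_le_mul_of_nonneg_left htan (mul_nonneg (hB i hi) (hB j hj))
  have hanti : ∑ i ∈ s, ∑ j ∈ s, P i j * (z j - x j) = -∑ i ∈ s, ∑ j ∈ s, P i j * (z i - x i) := by
    rw [sum_comm, ← sum_neg_distrib]
    refine sum_congr rfl fun i _ => ?_
    rw [← sum_neg_distrib]
    refine sum_congr rfl fun j _ => ?_
    simp only [P, show x j - x i = -(x i - x j) by ring, deriv_neg_of_even hWeven]
    ring
  have hfactor : ∑ i ∈ s, ∑ j ∈ s, P i j * (z i - x i)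
      = ∑ i ∈ s, B i * (z i - x i) * ∑ j ∈ s, B j * deriv W (x i - x j) := by
    simp only [P, mul_sum]
    exact sum_congr rfl fun i _ => sum_congr rfl fun j _ => by ring
  calc ∑ i ∈ s, ∑ j ∈ s, B i * B j * W (x i - x j)
        + 2 * ∑ i ∈ s, B i * (z i - x i) * ∑ j ∈ s, B j * deriv W (x i - x j)
      = ∑ i ∈ s, ∑ j ∈ s, B i * B j * W (x i - x j)
          + (∑ i ∈ s, ∑ j ∈ s, P i j * (z i - x i) - ∑ i ∈ s, ∑ j ∈ s, P i j * (z j - x j)) := by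
        rw [hanti, hfactor]
        ring
    _ = ∑ i ∈ s, ∑ j ∈ s, (B i * B j * W (x i - x j)
          + P i j * ((z i - x i) - (z j - x j))) := by
        simp only [← sum_sub_distrib, ← mul_sub, ← sum_add_distrib]
    _ ≤ ∑ i ∈ s, ∑ j ∈ s, B i * B j * W (z i - z j) :=
        sum_le_sum fun i hi => sum_le_sum fun j hj => hpair i hi j hj

namespace inQ

variable {M : ℕ} {X0 XM h : ℝ} {l : ℕ → ℝ}

theorem pos (hl : inQ M X0 XM l) (hX : X0 < XM) : 0 < M := by
  refine Nat.pos_of_ne_zero fun hM => hX.ne ?_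
  subst hM
  exact hl.1.symm.trans hl.2.1

theorem DhOp_pos (hl : inQ M X0 XM l) (hh : 0 < h) {i : ℕ} (hi : 1 ≤ i) (hiM : i ≤ M) :
    0 < DhOp h l i :=
  div_pos (sub_pos.2 (hl.2.2 i hi hiM)) hh

theorem DtOp_pos (hl : inQ M X0 XM l) (hh : 0 < h) {i : ℕ} (hi : 0 < i) (hiM : i < M) :
    0 < DtOp M h l i := by
  have hleft := hl.2.2 i hi hiM.le
  have hright := hl.2.2 (i + 1) (by omega) hiM
  rw [Nat.add_sub_cancel] at hright
  rw [DtOp, if_neg hi.ne', if_neg hiM.ne]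
  exact div_pos (by linarith) (by positivity)

theorem eventually_update {i : ℕ} (hl : inQ M X0 XM l) (hi : 0 < i) (hiM : i < M) :
    ∀ᶠ t in 𝓝 (0 : ℝ), inQ M X0 XM (Function.update l i (l i + t)) := by
  have hleft := hl.2.2 i hi hiM.le
  have hright := hl.2.2 (i + 1) (by omega) hiM
  rw [Nat.add_sub_cancel] at hright
  filter_upwards [Ioo_mem_nhds (show l (i - 1) - l i < 0 by linarith)
    (show 0 < l (i + 1) - l i by linarith)] with t ht
  refine ⟨?_, ?_, fun j hj hjM => ?_⟩
  · rw [Function.update_of_ne hi.ne'.symm, hl.1]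
  · rw [Function.update_of_ne hiM.ne', hl.2.1]
  · obtain ⟨ht1, ht2⟩ := Set.mem_Ioo.1 ht
    simp only [Function.update_apply]
    split_ifs with hj1i hji hji
    · omega
    · obtain rfl : j = i + 1 := by omega
      linarith
    · subst hji
      linarith
    · exact hl.2.2 j hj hjM

end inQ

theorem cCoef_pos {M : ℕ} {X0 XM h : ℝ} {f : ℝ → ℝ} {u0 l : ℕ → ℝ} (hl : inQ M X0 XM l)
    (hh : 0 < h) (hf : ∀ s, 0 < s → 0 < f s) {i : ℕ} (hi : 0 < i) (hiM : i < M)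
    (hu : 0 < u0 i) : 0 < cCoef M h f u0 l i := by
  have hD := hl.DtOp_pos hh hi hiM
  exact div_pos (pow_pos hu 2) (mul_pos hD (hf _ (div_pos hu hD)))

section InnerProduct

variable {M : ℕ} {h : ℝ}

theorem ipE_eq_sum_Ioo {l g : ℕ → ℝ} (h0 : l 0 * g 0 = 0) (hM : l M * g M = 0) :
    ipE M h l g = ∑ i ∈ Ioo 0 M, h * (l i * g i) := by
  rw [ipE, h0, hM, ← mul_sum]
  ring

theorem ipE_sub_ipE {l g l' g' : ℕ → ℝ} (h0 : l 0 * g 0 = l' 0 * g' 0)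
    (hM : l M * g M = l' M * g' M) :
    ipE M h l g - ipE M h l' g' = ∑ i ∈ Ioo 0 M, h * (l i * g i - l' i * g' i) := by
  rw [ipE, ipE, h0, hM, ← mul_sum, sum_sub_distrib]
  ring

def nodeWeight (M : ℕ) (h : ℝ) (i : ℕ) : ℝ := if i = 0 ∨ i = M then h / 2 else h

theorem nodeWeight_nonneg (hh : 0 ≤ h) (i : ℕ) : 0 ≤ nodeWeight M h i := by
  unfold nodeWeight
  split_ifs <;> linarith

theorem ipE_eq_sum_nodeWeight (hM : 0 < M) (l g : ℕ → ℝ) :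
    ipE M h l g = ∑ i ∈ range (M + 1), nodeWeight M h i * (l i * g i) := by
  rw [sum_range_succ, range_eq_Ico, ← Ioo_insert_left hM, sum_insert (by simp),
    sum_congr rfl fun i hi => by rw [nodeWeight, if_neg (by simp at hi; omega)]]
  simp only [nodeWeight, true_or, or_true, if_true, ipE, ← mul_sum]
  ring

theorem Shat_eq_sum (hM : 0 < M) (K : ℝ → ℝ) (u0 y : ℕ → ℝ) (i : ℕ) :
    Shat M h K u0 y i = ∑ j ∈ range (M + 1), nodeWeight M h j * u0 j * K (y i - y j) := by
  rw [Shat, ipE_eq_sum_nodeWeight hM]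
  exact sum_congr rfl fun j _ => by ring

theorem ipE_Shat_eq_sum_sum (hM : 0 < M) (K : ℝ → ℝ) (u0 y : ℕ → ℝ) :
    ipE M h u0 (fun i => Shat M h K u0 y i)
      = ∑ i ∈ range (M + 1), ∑ j ∈ range (M + 1),
          nodeWeight M h i * u0 i * (nodeWeight M h j * u0 j) * K (y i - y j) := by
  simp only [ipE_eq_sum_nodeWeight hM, Shat_eq_sum hM, mul_sum]
  exact sum_congr rfl fun i _ => sum_congr rfl fun j _ => by ring

end InnerProduct

section EnergyTerms

variable {M : ℕ} {h : ℝ} {x z : ℕ → ℝ}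

theorem dissipation_term_le {τ : ℝ} (hτ : 0 < τ) (hh : 0 ≤ h) {c xn : ℕ → ℝ}
    (hc : ∀ i ∈ Ioo 0 M, 0 ≤ c i) (h0 : z 0 = x 0) (hM : z M = x M) :
    ∑ i ∈ Ioo 0 M, h * (z i - x i) * (c i * (x i - xn i) / τ)
      ≤ 1 / (2 * τ) * ipE M h (fun i => c i * (z i - xn i)) (fun i => z i - xn i)
        - 1 / (2 * τ) * ipE M h (fun i => c i * (x i - xn i)) (fun i => x i - xn i) := by
  rw [← mul_sub, ipE_sub_ipE (by rw [h0]) (by rw [hM]), mul_sum]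
  refine sum_le_sum fun i hi => ?_
  have hsq : 0 ≤ h * c i * (z i - x i) ^ 2 / (2 * τ) := by
    have := hc i hi
    positivity
  have hexpand : 1 / (2 * τ) * (h * (c i * (z i - xn i) * (z i - xn i)
        - c i * (x i - xn i) * (x i - xn i)))
      = h * (z i - x i) * (c i * (x i - xn i) / τ) + h * c i * (z i - x i) ^ 2 / (2 * τ) := by
    field_simp
    ring
  linarith

theorem entropy_term_le {H : ℝ → ℝ} (hH : ConvexOn ℝ (Set.Ioi 0) H)
    (hHd : ∀ s, 0 < s → DifferentiableAt ℝ H s) (hh : 0 < h) {u0half : ℕ → ℝ}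
    (hu : ∀ k, 1 ≤ k → k ≤ M → 0 < u0half k)
    (hx : ∀ k, 1 ≤ k → k ≤ M → 0 < DhOp h x k) (hz : ∀ k, 1 ≤ k → k ≤ M → 0 < DhOp h z k)
    (h0 : z 0 = x 0) (hM : z M = x M) :
    ∑ i ∈ Ioo 0 M, h * (z i - x i) * dhOp h (Gcell h H u0half x) i
      ≤ h * ∑ k ∈ Icc 1 M, H (u0half k / DhOp h z k) * DhOp h z k
        - h * ∑ k ∈ Icc 1 M, H (u0half k / DhOp h x k) * DhOp h x k := by
  set G := Gcell h H u0half x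
  have htan : ∀ k ∈ Icc 1 M,
      H (u0half k / DhOp h x k) * DhOp h x k - G k * (DhOp h z k - DhOp h x k)
        ≤ H (u0half k / DhOp h z k) * DhOp h z k := by
    intro k hk
    obtain ⟨hk1, hkM⟩ := mem_Icc.1 hk
    exact perspective_tangent_le hH (hu k hk1 hkM) (hx k hk1 hkM) (hz k hk1 hkM)
      (hHd _ (div_pos (hu k hk1 hkM) (hx k hk1 hkM)))
  have hparts : h * ∑ k ∈ Icc 1 M, G k * (DhOp h z k - DhOp h x k)
      = -∑ i ∈ Ioo 0 M, h * (z i - x i) * dhOp h G i := by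
    have habel := sum_Icc_mul_sub_eq G (fun i => z i - x i) (by simp [h0]) M
    simp only [hM, sub_self, mul_zero, zero_add] at habel
    rw [mul_sum, sum_congr rfl fun k _ => show h * (G k * (DhOp h z k - DhOp h x k))
        = G k * ((z k - x k) - (z (k - 1) - x (k - 1))) by
      unfold DhOp
      field_simp
      ring, habel, ← sum_neg_distrib]
    refine sum_congr rfl fun i _ => ?_
    unfold dhOp
    field_simp
    ring
  have hsum := mul_le_mul_of_nonneg_left (sum_le_sum htan) hh.le
  rw [sum_sub_distrib, mul_sub, hparts] at hsum
  linarith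

theorem potential_term_le {V : ℝ → ℝ} (hV : ConvexOn ℝ Set.univ V) (hVd : Differentiable ℝ V)
    (hh : 0 ≤ h) {u0 : ℕ → ℝ} (hu : ∀ i ∈ Ioo 0 M, 0 ≤ u0 i) (h0 : z 0 = x 0)
    (hM : z M = x M) :
    ∑ i ∈ Ioo 0 M, h * (z i - x i) * (u0 i * deriv V (x i))
      ≤ ipE M h u0 (fun i => V (z i)) - ipE M h u0 (fun i => V (x i)) := by
  rw [ipE_sub_ipE (by rw [h0]) (by rw [hM])]
  refine sum_le_sum fun i hi => ?_
  have htan := hV.add_deriv_mul_sub_le (Set.mem_univ (x i)) (Set.mem_univ (z i)) (hVd (x i))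
  calc h * (z i - x i) * (u0 i * deriv V (x i))
      = h * u0 i * (deriv V (x i) * (z i - x i)) := by ring
    _ ≤ h * u0 i * (V (z i) - V (x i)) :=
        mul_le_mul_of_nonneg_left (by linarith) (mul_nonneg hh (hu i hi))
    _ = h * (u0 i * V (z i) - u0 i * V (x i)) := by ring

theorem interaction_term_le {W : ℝ → ℝ} (hW : ConvexOn ℝ Set.univ W) (hWd : Differentiable ℝ W)
    (hWeven : ∀ r, W (-r) = W r) (hMpos : 0 < M) (hh : 0 ≤ h) {u0 : ℕ → ℝ}
    (hu : ∀ i ∈ range (M + 1), 0 ≤ u0 i) (h0 : z 0 = x 0) (hM : z M = x M) :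
    ∑ i ∈ Ioo 0 M, h * (z i - x i) * (u0 i * Shat M h (deriv W) u0 x i)
      ≤ 1 / 2 * ipE M h u0 (fun i => Shat M h W u0 z i)
        - 1 / 2 * ipE M h u0 (fun i => Shat M h W u0 x i) := by
  have hpair := hW.pairwise_tangent_le hWd hWeven (range (M + 1)) (x := x) (z := z)
    (B := fun i => nodeWeight M h i * u0 i)
    fun i hi => mul_nonneg (nodeWeight_nonneg hh i) (hu i hi)
  have hlin : ∑ i ∈ range (M + 1), nodeWeight M h i * u0 i * (z i - x i)
        * ∑ j ∈ range (M + 1), nodeWeight M h j * u0 j * deriv W (x i - x j)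
      = ∑ i ∈ Ioo 0 M, h * (z i - x i) * (u0 i * Shat M h (deriv W) u0 x i) :=
    calc _ = ipE M h u0 (fun i => (z i - x i) * Shat M h (deriv W) u0 x i) := by
          rw [ipE_eq_sum_nodeWeight hMpos]
          refine sum_congr rfl fun i _ => ?_
          rw [Shat_eq_sum hMpos]
          ring
      _ = ∑ i ∈ Ioo 0 M, h * (u0 i * ((z i - x i) * Shat M h (deriv W) u0 x i)) :=
          ipE_eq_sum_Ioo (by simp [h0]) (by simp [hM])
      _ = _ := sum_congr rfl fun i _ => by ring
  rw [ipE_Shat_eq_sum_sum hMpos, ipE_Shat_eq_sum_sum hMpos]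
  linarith

theorem linear_term_eq (g : ℕ → ℝ) (h0 : z 0 = x 0) (hM : z M = x M) :
    ∑ i ∈ Ioo 0 M, h * (z i - x i) * g i = ipE M h g z - ipE M h g x := by
  rw [ipE_sub_ipE (by rw [h0]) (by rw [hM])]
  exact sum_congr rfl fun i _ => by ring

end EnergyTerms

section Scheme

variable {M : ℕ} {h τ : ℝ} {H f Vc Ve Wc We : ℝ → ℝ} {u0 u0half xn : ℕ → ℝ}

def schemeResidual (M : ℕ) (h τ : ℝ) (H f Vc Ve Wc We : ℝ → ℝ) (u0 u0half xn x : ℕ → ℝ)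
    (i : ℕ) : ℝ :=
  cCoef M h f u0 xn i * (x i - xn i) / τ + dhOp h (Gcell h H u0half x) i
    + u0 i * deriv Vc (x i) + u0 i * Shat M h (deriv Wc) u0 x i
    - u0 i * deriv Ve (xn i) - u0 i * Shat M h (deriv We) u0 xn i

theorem schemeUpdate_iff_schemeResidual_eq_zero {x : ℕ → ℝ} :
    SchemeUpdate M h τ H f Vc Ve Wc We u0 u0half xn x
      ↔ ∀ i, 1 ≤ i → i ≤ M - 1 → schemeResidual M h τ H f Vc Ve Wc We u0 u0half xn x i = 0 := by
  refine forall_congr' fun i => forall_congr' fun _ => forall_congr' fun _ => ?_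
  rw [schemeResidual]
  constructor <;> intro hi <;> linarith

theorem Jfun_add_sum_schemeResidual_le (hMpos : 0 < M) (hh : 0 < h) (hτ : 0 < τ)
    (hH : ConvexOn ℝ (Set.Ioi 0) H) (hHd : ∀ s, 0 < s → DifferentiableAt ℝ H s)
    (hf : ∀ s, 0 < s → 0 < f s)
    (hVc : ConvexOn ℝ Set.univ Vc) (hVcd : Differentiable ℝ Vc)
    (hWc : ConvexOn ℝ Set.univ Wc) (hWcd : Differentiable ℝ Wc)
    (hWceven : ∀ s, Wc (-s) = Wc s)
    (hu0 : ∀ i ≤ M, 0 < u0 i) (hu0half : ∀ i, 1 ≤ i → i ≤ M → 0 < u0half i)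
    {X0 XM : ℝ} {x z : ℕ → ℝ} (hxn : inQ M X0 XM xn) (hx : inQ M X0 XM x)
    (hz : inQ M X0 XM z) :
    Jfun M h τ H f Vc Ve Wc We u0 u0half xn x
        + ∑ i ∈ Ioo 0 M, h * (z i - x i) * schemeResidual M h τ H f Vc Ve Wc We u0 u0half xn x i
      ≤ Jfun M h τ H f Vc Ve Wc We u0 u0half xn z := by
  have h0 : z 0 = x 0 := hz.1.trans hx.1.symm
  have hM : z M = x M := hz.2.1.trans hx.2.1.symm
  have hsplit : ∑ i ∈ Ioo 0 M,
        h * (z i - x i) * schemeResidual M h τ H f Vc Ve Wc We u0 u0half xn x i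
      = ∑ i ∈ Ioo 0 M, h * (z i - x i) * (cCoef M h f u0 xn i * (x i - xn i) / τ)
        + ∑ i ∈ Ioo 0 M, h * (z i - x i) * dhOp h (Gcell h H u0half x) i
        + ∑ i ∈ Ioo 0 M, h * (z i - x i) * (u0 i * deriv Vc (x i))
        + ∑ i ∈ Ioo 0 M, h * (z i - x i) * (u0 i * Shat M h (deriv Wc) u0 x i)
        - ∑ i ∈ Ioo 0 M, h * (z i - x i) * (u0 i * deriv Ve (xn i))
        - ∑ i ∈ Ioo 0 M, h * (z i - x i) * (u0 i * Shat M h (deriv We) u0 xn i) := by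
    simp only [← sum_add_distrib, ← sum_sub_distrib]
    exact sum_congr rfl fun i _ => by rw [schemeResidual]; ring
  have hdiss := dissipation_term_le hτ hh.le (xn := xn) (fun i hi =>
    (cCoef_pos hxn hh hf (mem_Ioo.1 hi).1 (mem_Ioo.1 hi).2 (hu0 i (mem_Ioo.1 hi).2.le)).le) h0 hM
  have hent := entropy_term_le hH hHd hh hu0half (fun k hk hkM => hx.DhOp_pos hh hk hkM)
    (fun k hk hkM => hz.DhOp_pos hh hk hkM) h0 hM
  have hpot := potential_term_le hVc hVcd hh.le (fun i hi => (hu0 i (mem_Ioo.1 hi).2.le).le) h0 hM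
  have hint := interaction_term_le hWc hWcd hWceven hMpos hh.le
    (fun i hi => (hu0 i (Nat.lt_succ_iff.1 (mem_range.1 hi))).le) h0 hM
  have hVe := linear_term_eq (h := h) (fun i => u0 i * deriv Ve (xn i)) h0 hM
  have hWe := linear_term_eq (h := h) (fun i => u0 i * Shat M h (deriv We) u0 xn i) h0 hM
  rw [hsplit, Jfun, Jfun]
  linarith

theorem continuousAt_Gcell {x : ℕ → ℝ}
    (hΦ : ContinuousOn (fun s => s * deriv H s - H s) (Set.Ioi 0)) {k : ℕ}
    (hk : 0 < u0half k / DhOp h x k) :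
    ContinuousAt (fun y => Gcell h H u0half y k) x := by
  have hD : DhOp h x k ≠ 0 := fun hD => by simp [hD] at hk
  have hratio : ContinuousAt (fun y : ℕ → ℝ => u0half k / DhOp h y k) x :=
    continuousAt_const.div (by unfold DhOp; fun_prop) hD
  exact ContinuousAt.comp (g := fun s => s * deriv H s - H s) (hΦ.continuousAt (Ioi_mem_nhds hk))
    hratio

theorem continuousAt_schemeResidual (hH : ContDiffOn ℝ 1 H (Set.Ioi 0))
    (hVc : ContDiff ℝ 1 Vc) (hWc : ContDiff ℝ 1 Wc) {x : ℕ → ℝ} {i : ℕ}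
    (hi : 0 < u0half i / DhOp h x i) (hi' : 0 < u0half (i + 1) / DhOp h x (i + 1)) :
    ContinuousAt (fun y => schemeResidual M h τ H f Vc Ve Wc We u0 u0half xn y i) x := by
  have hΦ : ContinuousOn (fun s => s * deriv H s - H s) (Set.Ioi 0) :=
    (continuousOn_id.mul (hH.continuousOn_deriv_of_isOpen isOpen_Ioi le_rfl)).sub hH.continuousOn
  have hdh : ContinuousAt (fun y => dhOp h (Gcell h H u0half y) i) x :=
    ((continuousAt_Gcell hΦ hi').sub (continuousAt_Gcell hΦ hi)).div_const h
  have hVc' : Continuous fun y : ℕ → ℝ => deriv Vc (y i) :=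
    (hVc.continuous_deriv le_rfl).comp (continuous_apply i)
  have hWc' := hWc.continuous_deriv le_rfl
  have hShat : Continuous fun y => Shat M h (deriv Wc) u0 y i := by
    unfold Shat ipE
    fun_prop
  have hc : Continuous fun y : ℕ → ℝ => cCoef M h f u0 xn i * (y i - xn i) / τ := by fun_prop
  exact ((((hc.continuousAt.add hdh).add (continuous_const.mul hVc').continuousAt).add
    (continuous_const.mul hShat).continuousAt).sub continuousAt_const).sub continuousAt_const

theorem schemeResidual_eq_zero_of_forall_le (hMpos : 0 < M) (hh : 0 < h) (hτ : 0 < τ)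
    (hH : ConvexOn ℝ (Set.Ioi 0) H) (hHreg : ContDiffOn ℝ 1 H (Set.Ioi 0))
    (hf : ∀ s, 0 < s → 0 < f s)
    (hVc : ConvexOn ℝ Set.univ Vc) (hVcreg : ContDiff ℝ 1 Vc)
    (hWc : ConvexOn ℝ Set.univ Wc) (hWcreg : ContDiff ℝ 1 Wc)
    (hWceven : ∀ s, Wc (-s) = Wc s)
    (hu0 : ∀ i ≤ M, 0 < u0 i) (hu0half : ∀ i, 1 ≤ i → i ≤ M → 0 < u0half i)
    {X0 XM : ℝ} {x : ℕ → ℝ} (hxn : inQ M X0 XM xn) (hx : inQ M X0 XM x)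
    (hmin : ∀ z, inQ M X0 XM z →
      Jfun M h τ H f Vc Ve Wc We u0 u0half xn x ≤ Jfun M h τ H f Vc Ve Wc We u0 u0half xn z)
    {i : ℕ} (hi : 0 < i) (hiM : i < M) :
    schemeResidual M h τ H f Vc Ve Wc We u0 u0half xn x i = 0 := by
  set R := fun y => schemeResidual M h τ H f Vc Ve Wc We u0 u0half xn y i
  set y : ℝ → ℕ → ℝ := fun t => Function.update x i (x i + t)
  have hy0 : y 0 = x := by simp [y]
  have hsign : ∀ᶠ t in 𝓝 0, 0 ≤ t * R (y t) := by
    filter_upwards [hx.eventually_update hi hiM] with t hyt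
    have hgrad := Jfun_add_sum_schemeResidual_le (Ve := Ve) (We := We) hMpos hh hτ hH
      (fun s hs => (hHreg.contDiffAt (Ioi_mem_nhds hs)).differentiableAt one_ne_zero) hf
      hVc (hVcreg.differentiable one_ne_zero) hWc (hWcreg.differentiable one_ne_zero) hWceven
      hu0 hu0half hxn hyt hx
    rw [sum_eq_single_of_mem i (mem_Ioo.2 ⟨hi, hiM⟩)
      fun j _ hj => by simp [Function.update_of_ne hj]] at hgrad
    have hle := hmin (y t) hyt
    simp only [y, Function.update_self] at hgrad hle
    exact (mul_nonneg_iff_of_pos_left hh).1 (by linarith)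
  have hcont : ContinuousAt (fun t => R (y t)) 0 := by
    have hR := continuousAt_schemeResidual (M := M) (τ := τ) (f := f) (Ve := Ve) (We := We)
      (u0 := u0) (xn := xn) hHreg hVcreg hWcreg
      (div_pos (hu0half i hi hiM.le) (hx.DhOp_pos hh hi hiM.le))
      (div_pos (hu0half (i + 1) (by omega) hiM) (hx.DhOp_pos hh (by omega) hiM))
    rw [← hy0] at hR
    exact hR.comp (continuous_const.update i (by fun_prop)).continuousAt
  simpa [hy0] using eq_zero_of_eventually_mul_nonneg hcont hsign

end Scheme

theorem scheme_iff_minimizer_general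
    (M : ℕ) (X0 XM : ℝ) (hX : X0 < XM)
    (h : ℝ) (hh : h = (XM - X0) / (M : ℝ)) (τ : ℝ) (hτ : 0 < τ)
    (H f Vc Ve Wc We : ℝ → ℝ)
    (hHconv : ConvexOn ℝ (Set.Ioi 0) H) (hHreg : ContDiffOn ℝ 1 H (Set.Ioi 0))
    (hf : ∀ s : ℝ, 0 < s → 0 < f s)
    (hVcconv : ConvexOn ℝ Set.univ Vc) (hVcreg : ContDiff ℝ 1 Vc)
    (hWcconv : ConvexOn ℝ Set.univ Wc) (hWcreg : ContDiff ℝ 1 Wc)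
    (hWceven : ∀ s : ℝ, Wc (-s) = Wc s)
    (u0 u0half : ℕ → ℝ)
    (hu0 : ∀ i ≤ M, 0 < u0 i)
    (hu0half : ∀ i, 1 ≤ i → i ≤ M → 0 < u0half i)
    (xn x : ℕ → ℝ) (hxn : inQ M X0 XM xn) (hx : inQ M X0 XM x) :
    SchemeUpdate M h τ H f Vc Ve Wc We u0 u0half xn x
      ↔ ∀ z : ℕ → ℝ, inQ M X0 XM z →
          Jfun M h τ H f Vc Ve Wc We u0 u0half xn x
            ≤ Jfun M h τ H f Vc Ve Wc We u0 u0half xn z := by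
  have hMpos : 0 < M := hx.pos hX
  have hhpos : 0 < h := hh ▸ div_pos (sub_pos.2 hX) (Nat.cast_pos.2 hMpos)
  rw [schemeUpdate_iff_schemeResidual_eq_zero]
  constructor
  · intro hR z hz
    have hgrad := Jfun_add_sum_schemeResidual_le (Ve := Ve) (We := We) hMpos hhpos hτ hHconv
      (fun s hs => (hHreg.contDiffAt (Ioi_mem_nhds hs)).differentiableAt one_ne_zero) hf
      hVcconv (hVcreg.differentiable one_ne_zero) hWcconv (hWcreg.differentiable one_ne_zero)
      hWceven hu0 hu0half hxn hx hz
    rwa [sum_eq_zero fun i hi => by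
      rw [hR i (mem_Ioo.1 hi).1 (by have := (mem_Ioo.1 hi).2; omega), mul_zero], add_zero] at hgrad
  · intro hmin i hi hiM
    exact schemeResidual_eq_zero_of_forall_le hMpos hhpos hτ hHconv hHreg hf hVcconv hVcreg
      hWcconv hWcreg hWceven hu0 hu0half hxn hx hmin hi (by omega)

/-- Variational characterization of the scheme: `x ∈ Q` is a scheme update of `xⁿ`
iff `x` minimizes `J` over `Q`. -/
theorem scheme_iff_minimizer
    (M : ℕ) (hM : 2 ≤ M) (X0 XM : ℝ) (hX : X0 < XM)
    (h : ℝ) (hh : h = (XM - X0) / (M : ℝ)) (τ : ℝ) (hτ : 0 < τ)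
    (H f Vc Ve Wc We : ℝ → ℝ)
    (hHconv : ConvexOn ℝ (Set.Ioi 0) H) (hHreg : ContDiffOn ℝ 1 H (Set.Ioi 0))
    (hf : ∀ s : ℝ, 0 < s → 0 < f s)
    (hVcconv : ConvexOn ℝ Set.univ Vc) (hVcreg : ContDiff ℝ 1 Vc)
    (hVeconv : ConvexOn ℝ Set.univ Ve) (hVereg : ContDiff ℝ 1 Ve)
    (hWcconv : ConvexOn ℝ Set.univ Wc) (hWcreg : ContDiff ℝ 1 Wc)
    (hWeconv : ConvexOn ℝ Set.univ We) (hWereg : ContDiff ℝ 1 We)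
    (hWceven : ∀ s : ℝ, Wc (-s) = Wc s) (hWeeven : ∀ s : ℝ, We (-s) = We s)
    (u0 u0half : ℕ → ℝ)
    (hu0 : ∀ i ≤ M, 0 < u0 i)
    (hu0half : ∀ i, 1 ≤ i → i ≤ M → 0 < u0half i)
    (xn x : ℕ → ℝ) (hxn : inQ M X0 XM xn) (hx : inQ M X0 XM x) :
    SchemeUpdate M h τ H f Vc Ve Wc We u0 u0half xn x
      ↔ ∀ z : ℕ → ℝ, inQ M X0 XM z →
          Jfun M h τ H f Vc Ve Wc We u0 u0half xn x
            ≤ Jfun M h τ H f Vc Ve Wc We u0 u0half xn z :=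
  scheme_iff_minimizer_general M X0 XM hX h hh τ hτ H f Vc Ve Wc We hHconv hHreg hf hVcconv hVcreg
    hWcconv hWcreg hWceven u0 u0half hu0 hu0half xn x hxn hx
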